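/- 2N/log = 2D/log; more strongly, 2N/log ⊆ 1D, i.e., every family of promise problems solvable by a polynomial-size family of 2nfa's and having a logarithmic ceiling is solvable by a polynomial-size family of 1dfa's. -/

import Mathlib

/-! ## One-way nondeterministic finite automata -/

structure OneNFA (α : Type) : Type 1 where
  Q : Type
  [finQ : Fintype Q]
  start : Q
  next : Q → α → Set Q
  next_nonempty : ∀ q a, (next q a).Nonempty
  acc : Set Q

attribute [instance] OneNFA.finQ

namespace OneNFA

variable {α : Type}

/-- The state complexity (number of inner states). -/
def sc (M : OneNFA α) : ℕ := Fintype.card M.Q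

/-- `p` is a computation path of `M` on input `x`. -/
def IsPath (M : OneNFA α) (x : List α) (p : Fin (x.length + 1) → M.Q) : Prop :=
  p 0 = M.start ∧ ∀ i : Fin x.length, p i.succ ∈ M.next (p i.castSucc) (x.get i)

/-- `p` is an accepting computation path of `M` on input `x`. -/
def IsAccPath (M : OneNFA α) (x : List α) (p : Fin (x.length + 1) → M.Q) : Prop :=
  M.IsPath x p ∧ p (Fin.last x.length) ∈ M.acc

def Accepts (M : OneNFA α) (x : List α) : Prop := ∃ p, M.IsAccPath x p

/-- `M` is a 1dfa: every transition set is a singleton. -/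
def Deterministic (M : OneNFA α) : Prop := ∀ q a, ∃ q', M.next q a = {q'}

end OneNFA

/-! ## Families of promise problems -/

structure PromiseFamily (α : Type) where
  pos : ℕ → Set (List α)
  neg : ℕ → Set (List α)
  disj : ∀ n, Disjoint (pos n) (neg n)

namespace PromiseFamily

def valid {α : Type} (L : PromiseFamily α) (n : ℕ) : Set (List α) := L.pos n ∪ L.neg n

def co {α : Type} (L : PromiseFamily α) : PromiseFamily α :=
  ⟨L.neg, L.pos, fun n => (L.disj n).symm⟩

end PromiseFamily

/-- A family of promise problems over some finite alphabet. -/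
structure Family : Type 1 where
  alph : Type
  [finA : Fintype alph]
  prob : PromiseFamily alph

attribute [instance] Family.finA

def Family.co (F : Family) : Family := { alph := F.alph, prob := F.prob.co }

/-! ## One-way machine families -/

def Solves1 {α : Type} (M : ℕ → OneNFA α) (L : PromiseFamily α) : Prop :=
  ∀ n, (∀ x ∈ L.pos n, (M n).Accepts x) ∧ (∀ x ∈ L.neg n, ¬ (M n).Accepts x)

def PolySize1 {α : Type} (M : ℕ → OneNFA α) : Prop :=
  ∃ p : Polynomial ℕ, ∀ n, (M n).sc ≤ p.eval n

def Unambiguous1 {α : Type} (M : ℕ → OneNFA α) (L : PromiseFamily α) : Prop :=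
  ∀ n, ∀ x ∈ L.valid n, {p | (M n).IsAccPath x p}.Subsingleton

def AcceptFew1 {α : Type} (M : ℕ → OneNFA α) (L : PromiseFamily α) : Prop :=
  ∃ P : MvPolynomial (Fin 2) ℕ, ∀ n, ∀ x ∈ L.valid n,
    {p | (M n).IsAccPath x p}.ncard ≤ MvPolynomial.eval ![n, x.length] P

def WeaklyUnambiguous1 {α : Type} (M : ℕ → OneNFA α) (L : PromiseFamily α) : Prop :=
  ∀ n, ∀ x ∈ L.valid n, ∀ q : (M n).Q,
    {p | (M n).IsAccPath x p ∧ p (Fin.last x.length) = q}.Subsingleton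

def ReachUnambiguous1 {α : Type} (M : ℕ → OneNFA α) (L : PromiseFamily α) : Prop :=
  ∀ n, ∀ x ∈ L.valid n, ∀ i ≤ x.length, ∀ q : (M n).Q,
    {p : Fin ((x.take i).length + 1) → (M n).Q |
      (M n).IsPath (x.take i) p ∧ p (Fin.last (x.take i).length) = q}.Subsingleton

def ReachFew1 {α : Type} (M : ℕ → OneNFA α) (L : PromiseFamily α) : Prop :=
  ∃ P : MvPolynomial (Fin 2) ℕ, ∀ n, ∀ x ∈ L.valid n, ∀ i ≤ x.length, ∀ q : (M n).Q,
    {p : Fin ((x.take i).length + 1) → (M n).Q |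
      (M n).IsPath (x.take i) p ∧ p (Fin.last (x.take i).length) = q}.ncard ≤
      MvPolynomial.eval ![n, x.length] P

/-! ## One-way nonuniform state complexity classes -/

def oneN : Set Family :=
  {F | ∃ M : ℕ → OneNFA F.alph, PolySize1 M ∧ Solves1 M F.prob}

def oneD : Set Family :=
  {F | ∃ M : ℕ → OneNFA F.alph, PolySize1 M ∧ (∀ n, (M n).Deterministic) ∧ Solves1 M F.prob}

def oneU : Set Family :=
  {F | ∃ M : ℕ → OneNFA F.alph, PolySize1 M ∧ Unambiguous1 M F.prob ∧ Solves1 M F.prob}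

def oneFew : Set Family :=
  {F | ∃ M : ℕ → OneNFA F.alph, PolySize1 M ∧ AcceptFew1 M F.prob ∧ Solves1 M F.prob}

def oneFewU : Set Family :=
  {F | ∃ M : ℕ → OneNFA F.alph, PolySize1 M ∧ AcceptFew1 M F.prob ∧
        WeaklyUnambiguous1 M F.prob ∧ Solves1 M F.prob}

def oneReachU : Set Family :=
  {F | ∃ M : ℕ → OneNFA F.alph, PolySize1 M ∧ AcceptFew1 M F.prob ∧
        ReachUnambiguous1 M F.prob ∧ Solves1 M F.prob}

def oneReachFew : Set Family :=
  {F | ∃ M : ℕ → OneNFA F.alph, PolySize1 M ∧ AcceptFew1 M F.prob ∧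
        ReachFew1 M F.prob ∧ Solves1 M F.prob}

def oneReachFewU : Set Family :=
  {F | ∃ M : ℕ → OneNFA F.alph, PolySize1 M ∧ AcceptFew1 M F.prob ∧
        ReachFew1 M F.prob ∧ WeaklyUnambiguous1 M F.prob ∧ Solves1 M F.prob}

/-- The complement class `co-C`. -/
def coC (C : Set Family) : Set Family := {F | F.co ∈ C}
/-! ## Two-way nondeterministic finite automata -/

/-- A tape symbol: either an input symbol, the left endmarker `Sum.inr false`,
or the right endmarker `Sum.inr true`. -/
def TapeSym (α : Type) : Type := α ⊕ Bool

/-- The symbol held in cell `i` of the tape containing `▷x◁`. -/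
def tapeAt {α : Type} (x : List α) (i : ℕ) : TapeSym α :=
  if h0 : i = 0 then Sum.inr false
  else if h : i ≤ x.length then Sum.inl (x.get ⟨i - 1, by omega⟩)
  else Sum.inr true

structure TwoNFA (α : Type) : Type 1 where
  Q : Type
  [finQ : Fintype Q]
  start : Q
  acc : Set Q
  rej : Set Q
  acc_rej_disj : Disjoint acc rej
  next : Q → TapeSym α → Set (Q × ℤ)
  next_dir : ∀ q a t, t ∈ next q a → t.2 = -1 ∨ t.2 = 0 ∨ t.2 = 1

attribute [instance] TwoNFA.finQ

namespace TwoNFA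

variable {α : Type}

def sc (M : TwoNFA α) : ℕ := Fintype.card M.Q

def Halting (M : TwoNFA α) (q : M.Q) : Prop := q ∈ M.acc ∨ q ∈ M.rej

/-- Configuration `c` yields configuration `c'` in one step on input `x`. -/
def Yields (M : TwoNFA α) (x : List α) (c c' : M.Q × ℕ) : Prop :=
  ¬ M.Halting c.1 ∧ c.2 ≤ x.length + 1 ∧ c'.2 ≤ x.length + 1 ∧
    ∃ d : ℤ, (c'.1, d) ∈ M.next c.1 (tapeAt x c.2) ∧ (c'.2 : ℤ) = (c.2 : ℤ) + d

/-- A partial computation path of length `k` of `M` on `x`. -/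
def IsPartialPath (M : TwoNFA α) (x : List α) (k : ℕ) (p : Fin (k + 1) → M.Q × ℕ) : Prop :=
  p 0 = (M.start, 0) ∧ ∀ i : Fin k, M.Yields x (p i.castSucc) (p i.succ)

/-- A (full) computation path: the final configuration is the only halting one. -/
def IsCompPath (M : TwoNFA α) (x : List α) (k : ℕ) (p : Fin (k + 1) → M.Q × ℕ) : Prop :=
  M.IsPartialPath x k p ∧ ∀ i : Fin (k + 1), (M.Halting (p i).1 ↔ i = Fin.last k)

def IsAccPath (M : TwoNFA α) (x : List α) (k : ℕ) (p : Fin (k + 1) → M.Q × ℕ) : Prop :=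
  M.IsCompPath x k p ∧ (p (Fin.last k)).1 ∈ M.acc

def Accepts (M : TwoNFA α) (x : List α) : Prop := ∃ k p, M.IsAccPath x k p

def Deterministic (M : TwoNFA α) : Prop := ∀ q a, ∃ t, M.next q a = {t}

/-- The set of accepting computation paths of `M` on `x`. -/
def accPaths (M : TwoNFA α) (x : List α) : Set ((k : ℕ) × (Fin (k + 1) → M.Q × ℕ)) :=
  {kp | M.IsAccPath x kp.1 kp.2}

/-- The set of computation paths of `M` on `x` ending at configuration `conf`. -/
def compPathsTo (M : TwoNFA α) (x : List α) (conf : M.Q × ℕ) :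
    Set ((k : ℕ) × (Fin (k + 1) → M.Q × ℕ)) :=
  {kp | M.IsCompPath x kp.1 kp.2 ∧ kp.2 (Fin.last kp.1) = conf}

/-- The set of partial computation paths of `M` on `x` ending at configuration `conf`. -/
def partialPathsTo (M : TwoNFA α) (x : List α) (conf : M.Q × ℕ) :
    Set ((k : ℕ) × (Fin (k + 1) → M.Q × ℕ)) :=
  {kp | M.IsPartialPath x kp.1 kp.2 ∧ kp.2 (Fin.last kp.1) = conf}

end TwoNFA

/-! ## Two-way machine families -/

def Solves2 {α : Type} (M : ℕ → TwoNFA α) (L : PromiseFamily α) : Prop :=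
  ∀ n, (∀ x ∈ L.pos n, (M n).Accepts x) ∧ (∀ x ∈ L.neg n, ¬ (M n).Accepts x)

def PolySize2 {α : Type} (M : ℕ → TwoNFA α) : Prop :=
  ∃ p : Polynomial ℕ, ∀ n, (M n).sc ≤ p.eval n

def Unambiguous2 {α : Type} (M : ℕ → TwoNFA α) (L : PromiseFamily α) : Prop :=
  ∀ n, ∀ x ∈ L.valid n, ((M n).accPaths x).Subsingleton

def AcceptFew2 {α : Type} (M : ℕ → TwoNFA α) (L : PromiseFamily α) : Prop :=
  ∃ P : MvPolynomial (Fin 2) ℕ, ∀ n, ∀ x ∈ L.valid n,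
    ((M n).accPaths x).encard ≤ (MvPolynomial.eval ![n, x.length] P : ℕ∞)

def WeaklyUnambiguous2 {α : Type} (M : ℕ → TwoNFA α) (L : PromiseFamily α) : Prop :=
  ∀ n, ∀ x ∈ L.valid n, ∀ conf : (M n).Q × ℕ, conf.1 ∈ (M n).acc →
    ((M n).compPathsTo x conf).Subsingleton

def ReachUnambiguous2 {α : Type} (M : ℕ → TwoNFA α) (L : PromiseFamily α) : Prop :=
  ∀ n, ∀ x ∈ L.valid n, ∀ conf : (M n).Q × ℕ,
    ((M n).partialPathsTo x conf).Subsingleton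

def ReachFew2 {α : Type} (M : ℕ → TwoNFA α) (L : PromiseFamily α) : Prop :=
  ∃ P : MvPolynomial (Fin 2) ℕ, ∀ n, ∀ x ∈ L.valid n, ∀ conf : (M n).Q × ℕ,
    ((M n).partialPathsTo x conf).encard ≤ (MvPolynomial.eval ![n, x.length] P : ℕ∞)

/-! ## Two-way nonuniform state complexity classes -/

def twoN : Set Family :=
  {F | ∃ M : ℕ → TwoNFA F.alph, PolySize2 M ∧ Solves2 M F.prob}

def twoD : Set Family :=
  {F | ∃ M : ℕ → TwoNFA F.alph, PolySize2 M ∧ (∀ n, (M n).Deterministic) ∧ Solves2 M F.prob}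

def twoU : Set Family :=
  {F | ∃ M : ℕ → TwoNFA F.alph, PolySize2 M ∧ Unambiguous2 M F.prob ∧ Solves2 M F.prob}

def twoFew : Set Family :=
  {F | ∃ M : ℕ → TwoNFA F.alph, PolySize2 M ∧ AcceptFew2 M F.prob ∧ Solves2 M F.prob}

def twoFewU : Set Family :=
  {F | ∃ M : ℕ → TwoNFA F.alph, PolySize2 M ∧ AcceptFew2 M F.prob ∧
        WeaklyUnambiguous2 M F.prob ∧ Solves2 M F.prob}

def twoReachU : Set Family :=
  {F | ∃ M : ℕ → TwoNFA F.alph, PolySize2 M ∧ AcceptFew2 M F.prob ∧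
        ReachUnambiguous2 M F.prob ∧ Solves2 M F.prob}

def twoReachFew : Set Family :=
  {F | ∃ M : ℕ → TwoNFA F.alph, PolySize2 M ∧ AcceptFew2 M F.prob ∧
        ReachFew2 M F.prob ∧ Solves2 M F.prob}

def twoReachFewU : Set Family :=
  {F | ∃ M : ℕ → TwoNFA F.alph, PolySize2 M ∧ AcceptFew2 M F.prob ∧
        ReachFew2 M F.prob ∧ WeaklyUnambiguous2 M F.prob ∧ Solves2 M F.prob}

/-! ## Ceilings -/

/-- The family `F` has an `f(n)`-ceiling. -/
def HasCeiling (F : Family) (f : ℕ → ℕ) : Prop :=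
  ∀ n, ∀ x ∈ F.prob.valid n, x.length ≤ f n

/-- The restriction `C/F` of a class `C` to families having an `f`-ceiling for some `f ∈ S`. -/
def ceil (C : Set Family) (S : Set (ℕ → ℕ)) : Set Family :=
  {F | F ∈ C ∧ ∃ f ∈ S, HasCeiling F f}

def polyFuns : Set (ℕ → ℕ) := {f | ∃ p : Polynomial ℕ, ∀ n, f n = p.eval n}

/-- Super-exponential functions: `f(n) > 2^{p(n)}` for all but finitely many `n`,
for every polynomial `p`. -/
def supexpFuns : Set (ℕ → ℕ) :=
  {f | ∀ p : Polynomial ℕ, ∃ N, ∀ n ≥ N, 2 ^ p.eval n < f n}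

/-- `F` has a logarithmic ceiling `ℓ(n) = a·log₂ n + b` with constants `a, b ≥ 0`. -/
def HasLogCeiling (F : Family) : Prop :=
  ∃ a b : ℝ, 0 ≤ a ∧ 0 ≤ b ∧
    ∀ n, ∀ x ∈ F.prob.valid n, (x.length : ℝ) ≤ a * Real.logb 2 n + b

/-- The restriction `C/log` of a class `C` to families having logarithmic ceilings. -/
def ceilLog (C : Set Family) : Set Family := {F | F ∈ C ∧ HasLogCeiling F}
/-! ## The alphabet `{0, 1, #}` and encodings -/

inductive Sym3 : Type
  | zero | one | hash
deriving DecidableEq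

instance : Fintype Sym3 :=
  ⟨{Sym3.zero, Sym3.one, Sym3.hash}, by intro x; cases x <;> simp⟩

/-- The block `1^i 0^{m-i}`. -/
def block (m i : ℕ) : List Sym3 :=
  List.replicate i Sym3.one ++ List.replicate (m - i) Sym3.zero

lemma block_length {m i : ℕ} (h : i ≤ m) : (block m i).length = m := by
  simp [block]; omega

lemma block_count {m : ℕ} (i : ℕ) : (block m i).count Sym3.one = i := by
  simp [block, List.count_append, List.count_replicate]

lemma block_inj {m i j : ℕ} (h : block m i = block m j) : i = j := by
  have := block_count (m := m) i
  rw [h, block_count] at this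
  omega

/-- The encoding `[[i₁,…,i_k]]_m` of a list of numbers. -/
def enc (m : ℕ) : List ℕ → List Sym3
  | [] => []
  | [i] => block m i
  | i :: j :: rest => block m i ++ Sym3.zero :: enc m (j :: rest)

/-- Lists of length `k` with entries in `[n]`. -/
def ValidList (n k : ℕ) (l : List ℕ) : Prop :=
  l.length = k ∧ ∀ i ∈ l, 1 ≤ i ∧ i ≤ n

lemma enc_length {m : ℕ} :
    ∀ l : List ℕ, (∀ i ∈ l, i ≤ m) → (enc m l).length = l.length * (m + 1) - 1
  | [] => by simp [enc]
  | [i] => by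
      intro h
      simp [enc, block_length (h i (by simp))]
  | i :: j :: rest => by
      intro h
      have ih := enc_length (j :: rest) (fun a ha => h a (List.mem_cons_of_mem _ ha))
      have hb : (block m i).length = m := block_length (h i (List.mem_cons_self))
      show (block m i ++ Sym3.zero :: enc m (j :: rest)).length = _
      rw [List.length_append, hb, List.length_cons, ih]
      have hc : (i :: j :: rest).length = (j :: rest).length + 1 := by simp
      rw [hc]
      set L := (j :: rest).length with hLdef
      have hL : 1 ≤ L := by simp [hLdef]
      have h1 : (L + 1) * (m + 1) = L * (m + 1) + (m + 1) := by ring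
      rw [h1]
      set P := L * (m + 1) with hPdef
      have hP : 1 ≤ P := by
        have := Nat.mul_le_mul hL (Nat.le_add_left 1 m)
        simpa [hPdef] using this
      omega

lemma enc_ne_nil {m : ℕ} (i : ℕ) (rest : List ℕ) (hi : 1 ≤ i) :
    enc m (i :: rest) ≠ [] := by
  cases rest with
  | nil =>
      simp only [enc, block]
      intro h
      have := congrArg List.length h
      simp at this
      omega
  | cons j rest' =>
      simp only [enc]
      intro h
      have := congrArg List.length h
      simp at this

lemma enc_inj {m : ℕ} :
    ∀ u w : List ℕ, (∀ i ∈ u, 1 ≤ i ∧ i ≤ m) → (∀ i ∈ w, 1 ≤ i ∧ i ≤ m) →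
      enc m u = enc m w → u = w
  | [], [], _, _, _ => rfl
  | [], j :: w', _, hw, h => by
      exact absurd h.symm (enc_ne_nil j w' (hw j (by simp)).1)
  | i :: u', [], hu, _, h => by
      exact absurd h (enc_ne_nil i u' (hu i (by simp)).1)
  | [i], [j], hu, hw, h => by
      simp only [enc] at h
      rw [block_inj h]
  | [i], j :: b :: w', hu, hw, h => by
      exfalso
      have hl := congrArg List.length h
      rw [show enc m [i] = block m i from rfl,
        show enc m (j :: b :: w') = block m j ++ Sym3.zero :: enc m (b :: w') from rfl] at hl
      rw [List.length_append, List.length_cons,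
        block_length (hu i (by simp)).2, block_length (hw j (by simp)).2] at hl
      omega
  | i :: a :: u', [j], hu, hw, h => by
      exfalso
      have hl := congrArg List.length h
      rw [show enc m [j] = block m j from rfl,
        show enc m (i :: a :: u') = block m i ++ Sym3.zero :: enc m (a :: u') from rfl] at hl
      rw [List.length_append, List.length_cons,
        block_length (hu i (by simp)).2, block_length (hw j (by simp)).2] at hl
      omega
  | i :: a :: u', j :: b :: w', hu, hw, h => by
      rw [show enc m (i :: a :: u') = block m i ++ Sym3.zero :: enc m (a :: u') from rfl,
        show enc m (j :: b :: w') = block m j ++ Sym3.zero :: enc m (b :: w') from rfl] at h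
      have hlen : (block m i).length = (block m j).length := by
        rw [block_length (hu i (by simp)).2, block_length (hw j (by simp)).2]
      obtain ⟨h1, h2⟩ := List.append_inj h hlen
      have h3 : enc m (a :: u') = enc m (b :: w') := by
        simpa using h2
      have ih := enc_inj (a :: u') (b :: w')
        (fun x hx => hu x (List.mem_cons_of_mem _ hx))
        (fun x hx => hw x (List.mem_cons_of_mem _ hx)) h3
      rw [block_inj h1, ih]
/-! ## The promise problem family `L₁` -/

def L1pos (n : ℕ) : Set (List Sym3) :=
  {x | ∃ u v : List ℕ, ValidList n n u ∧ ValidList n n v ∧ u ≠ v ∧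
        x = enc n u ++ Sym3.hash :: enc n v}

def L1neg (n : ℕ) : Set (List Sym3) :=
  {x | ∃ u v : List ℕ, ValidList n n u ∧ ValidList n n v ∧ u = v ∧
        x = enc n u ++ Sym3.hash :: enc n v}

lemma L1_disj (n : ℕ) : Disjoint (L1pos n) (L1neg n) := by
  rw [Set.disjoint_left]
  rintro x ⟨u, v, hu, hv, huv, rfl⟩ ⟨u', v', hu', hv', huv', heq⟩
  have hlen : (enc n u).length = (enc n u').length := by
    rw [enc_length u (fun i hi => (hu.2 i hi).2),
      enc_length u' (fun i hi => (hu'.2 i hi).2), hu.1, hu'.1]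
  obtain ⟨h1, h2⟩ := List.append_inj heq hlen
  have h2' : enc n v = enc n v' := by simpa using h2
  have e1 : u = u' := enc_inj u u' hu.2 hu'.2 h1
  have e2 : v = v' := enc_inj v v' hv.2 hv'.2 h2'
  exact huv (by rw [e1, e2, huv'])

def L1prob : PromiseFamily Sym3 := ⟨L1pos, L1neg, L1_disj⟩

def L1fam : Family := { alph := Sym3, prob := L1prob }

/-! ## Matrices, their encodings, and the promise problem family `L₂` -/

/-- `R` represents an `n × n` matrix with entries in `[n]`, given as its list of rows. -/
def ValidMat (n : ℕ) (R : List (List ℕ)) : Prop :=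
  R.length = n ∧ ∀ r ∈ R, ValidList n n r

/-- The encoding `[[D]]_n` of a matrix: its encoded rows joined by `#`. -/
def encMat (n : ℕ) : List (List ℕ) → List Sym3
  | [] => []
  | [r] => enc n r
  | r :: s :: rest => enc n r ++ Sym3.hash :: encMat n (s :: rest)

lemma encMat_len {n : ℕ} :
    ∀ R : List (List ℕ), (∀ r ∈ R, ValidList n n r) →
      (encMat n R).length = R.length * (n * (n + 1) - 1 + 1) - 1
  | [] => by simp [encMat]
  | [r] => by
      intro h
      have hr := h r (by simp)
      have he : (enc n r).length = n * (n + 1) - 1 := by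
        rw [enc_length r (fun i hi => (hr.2 i hi).2), hr.1]
      show (enc n r).length = ([r] : List (List ℕ)).length * (n * (n + 1) - 1 + 1) - 1
      rw [he, show ([r] : List (List ℕ)).length = 1 from rfl]
      omega
  | r :: s :: rest => by
      intro h
      have ih := encMat_len (s :: rest) (fun a ha => h a (List.mem_cons_of_mem _ ha))
      have hr := h r (by simp)
      have he : (enc n r).length = n * (n + 1) - 1 := by
        rw [enc_length r (fun i hi => (hr.2 i hi).2), hr.1]
      show (enc n r ++ Sym3.hash :: encMat n (s :: rest)).length = _
      rw [List.length_append, he, List.length_cons, ih]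
      have hc : (r :: s :: rest).length = (s :: rest).length + 1 := by simp
      rw [hc]
      set e := n * (n + 1) - 1 with hedef
      set L := (s :: rest).length with hLdef
      have hL : 1 ≤ L := by simp [hLdef]
      have h1 : (L + 1) * (e + 1) = L * (e + 1) + (e + 1) := by ring
      rw [h1]
      set P := L * (e + 1) with hPdef
      have hP : 1 ≤ P := by
        calc 1 = 1 * 1 := by ring
        _ ≤ L * (e + 1) := Nat.mul_le_mul hL (by omega)
      omega

lemma encMat_inj {n : ℕ} :
    ∀ R W : List (List ℕ), (∀ r ∈ R, ValidList n n r) → (∀ r ∈ W, ValidList n n r) →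
      R.length = W.length → encMat n R = encMat n W → R = W
  | [], [], _, _, _, _ => rfl
  | [], _ :: _, _, _, hl, _ => by
      simp only [List.length_cons, List.length_nil] at hl
      omega
  | _ :: _, [], _, _, hl, _ => by
      simp only [List.length_cons, List.length_nil] at hl
      omega
  | [r], [w], hR, hW, _, h => by
      have := enc_inj r w (hR r (by simp)).2 (hW w (by simp)).2 h
      rw [this]
  | [r], w :: w' :: W', _, _, hl, _ => by
      simp only [List.length_cons, List.length_nil] at hl
      omega
  | r :: r' :: R', [w], _, _, hl, _ => by
      simp only [List.length_cons, List.length_nil] at hl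
      omega
  | r :: r' :: R', w :: w' :: W', hR, hW, hl, h => by
      rw [show encMat n (r :: r' :: R') = enc n r ++ Sym3.hash :: encMat n (r' :: R') from rfl,
        show encMat n (w :: w' :: W') = enc n w ++ Sym3.hash :: encMat n (w' :: W') from rfl] at h
      have hrlen : (enc n r).length = (enc n w).length := by
        have h1 := hR r (by simp); have h2 := hW w (by simp)
        rw [enc_length r (fun i hi => (h1.2 i hi).2),
          enc_length w (fun i hi => (h2.2 i hi).2), h1.1, h2.1]
      obtain ⟨h1, h2⟩ := List.append_inj h hrlen
      have h3 : encMat n (r' :: R') = encMat n (w' :: W') := by simpa using h2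
      have ihr := enc_inj r w (hR r (by simp)).2 (hW w (by simp)).2 h1
      have ih := encMat_inj (r' :: R') (w' :: W')
        (fun a ha => hR a (List.mem_cons_of_mem _ ha))
        (fun a ha => hW a (List.mem_cons_of_mem _ ha))
        (by simpa using hl) h3
      rw [ihr, ih]

/-- `SelSum R s` holds iff `s` is obtained by choosing one entry from each row of `R`
(the value `sum_D(σ)` for some choice function `σ`). -/
inductive SelSum : List (List ℕ) → ℕ → Prop
  | nil : SelSum [] 0
  | cons {a : ℕ} {r : List ℕ} {rest : List (List ℕ)} {s : ℕ} :
      a ∈ r → SelSum rest s → SelSum (r :: rest) (a + s)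

def L2pos (n : ℕ) : Set (List Sym3) :=
  {x | ∃ R R' : List (List ℕ), ValidMat n R ∧ ValidMat n R' ∧
        (∃ s : ℕ, SelSum R s ∧ SelSum R' s) ∧
        x = encMat n R ++ Sym3.hash :: Sym3.hash :: encMat n R'}

def L2neg (n : ℕ) : Set (List Sym3) :=
  {x | ∃ R R' : List (List ℕ), ValidMat n R ∧ ValidMat n R' ∧
        (∀ s s' : ℕ, SelSum R s → SelSum R' s' → s ≠ s') ∧
        x = encMat n R ++ Sym3.hash :: Sym3.hash :: encMat n R'}

lemma L2_disj (n : ℕ) : Disjoint (L2pos n) (L2neg n) := by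
  rw [Set.disjoint_left]
  rintro x ⟨R, R', hR, hR', ⟨s, hs, hs'⟩, rfl⟩ ⟨W, W', hW, hW', hne, heq⟩
  have hlen : (encMat n R).length = (encMat n W).length := by
    rw [encMat_len R hR.2, encMat_len W hW.2, hR.1, hW.1]
  obtain ⟨h1, h2⟩ := List.append_inj heq hlen
  have h2' : encMat n R' = encMat n W' := by simpa using h2
  have e1 : R = W := encMat_inj R W hR.2 hW.2 (by rw [hR.1, hW.1]) h1
  have e2 : R' = W' := encMat_inj R' W' hR'.2 hW'.2 (by rw [hR'.1, hW'.1]) h2'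
  exact hne s s (e1 ▸ hs) (e2 ▸ hs') rfl

def L2prob : PromiseFamily Sym3 := ⟨L2pos, L2neg, L2_disj⟩

def L2fam : Family := { alph := Sym3, prob := L2prob }
/-! ## One-way probabilistic finite automata data -/

/-- Product of the matrices of the symbols of a word. -/
noncomputable def wordMatrix {α Q : Type} [Fintype Q] [DecidableEq Q]
    (Mσ : TapeSym α → Matrix Q Q ℝ) (w : List (TapeSym α)) : Matrix Q Q ℝ :=
  (w.map Mσ).prod

/-- The tape word `▷ x ◁`. -/
def tapeWord {α : Type} (x : List α) : List (TapeSym α) :=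
  Sum.inr false :: (x.map Sum.inl ++ [Sum.inr true])

/-- `p_{acc}(x : q)`: the `q`-entry of the row vector `ν · M_{▷x◁}`. -/
noncomputable def pacc {α Q : Type} [Fintype Q] [DecidableEq Q]
    (ν : Q → ℝ) (Mσ : TapeSym α → Matrix Q Q ℝ) (x : List α) (q : Q) : ℝ :=
  Matrix.vecMul ν (wordMatrix Mσ (tapeWord x)) q

/-!
An input of length at most `ℓ(n) = a·log₂ n + b` can be stored verbatim in the state of a 1dfa:
remembering the prefix read so far takes at most `(|Σ| + 1)^ℓ(n) + 1 = n^O(1)` states. So every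
family with a logarithmic ceiling, whatever its complexity, lies in 1D. A 1dfa is simulated by a
2dfa that sweeps once from left to right, so `1D ⊆ 2D ⊆ 2N`.
-/

namespace OneNFA

variable {α : Type} (M : OneNFA α) (f : M.Q → α → M.Q)

def run (x : List α) (i : ℕ) : M.Q := (x.take i).foldl f M.start

variable {M f}

theorem run_succ {x : List α} {i : ℕ} (hi : i < x.length) :
    M.run f x (i + 1) = f (M.run f x i) x[i] := by
  rw [run, ← List.take_concat_get' x i hi, List.foldl_append]
  rfl

theorem accepts_iff_run_mem (hf : ∀ q a, M.next q a = {f q a}) (x : List α) :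
    M.Accepts x ↔ M.run f x x.length ∈ M.acc := by
  have run_unique : ∀ p, M.IsPath x p → ∀ i, p i = M.run f x i := by
    rintro p ⟨hp0, hstep⟩ i
    induction i using Fin.induction with
    | zero => exact hp0
    | succ i ih =>
      have := hstep i
      rw [ih, hf, Set.mem_singleton_iff] at this
      rw [this, Fin.val_succ, run_succ i.isLt]
      rfl
  constructor
  · rintro ⟨p, hp, hacc⟩
    rwa [run_unique p hp] at hacc
  · intro hacc
    refine ⟨fun i => M.run f x i, ⟨rfl, fun i => ?_⟩, hacc⟩
    rw [hf, Set.mem_singleton_iff]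
    exact run_succ i.isLt

end OneNFA

noncomputable instance List.fintypeLengthLe (α : Type) [Finite α] (L : ℕ) :
    Fintype {l : List α // l.length ≤ L} :=
  (List.finite_length_le α L).fintype

theorem List.card_length_le_le (α : Type) [Fintype α] (L : ℕ) :
    Fintype.card {l : List α // l.length ≤ L} ≤ (Fintype.card α + 1) ^ L := by
  have hinj : Function.Injective
      fun l : {l : List α // l.length ≤ L} => fun i : Fin L => l.1[(i : ℕ)]? := by
    intro l₁ l₂ h
    refine Subtype.ext (List.ext_getElem? fun i => ?_)
    by_cases hi : i < L
    · exact congrFun h ⟨i, hi⟩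
    · rw [List.getElem?_eq_none (by have := l₁.2; omega),
        List.getElem?_eq_none (by have := l₂.2; omega)]
  simpa using Fintype.card_le_of_injective _ hinj

section Memo

variable {α : Type} (L : ℕ)

/-- `none` is the sink reached by inputs longer than `L`. -/
def memoNext : Option {l : List α // l.length ≤ L} → α → Option {l : List α // l.length ≤ L}
  | none, _ => none
  | some ⟨l, _⟩, a => if h : l.length < L then some ⟨l ++ [a], by simpa using h⟩ else none

noncomputable def memoDFA [Fintype α] (A : Set (List α)) : OneNFA α where
  Q := Option {l : List α // l.length ≤ L}
  start := some ⟨[], Nat.zero_le L⟩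
  next q a := {memoNext L q a}
  next_nonempty _ _ := Set.singleton_nonempty _
  acc := Option.some '' {l | l.1 ∈ A}

variable [Fintype α] (A : Set (List α))

theorem memoDFA_deterministic : (memoDFA L A).Deterministic :=
  fun q a => ⟨memoNext L q a, rfl⟩

theorem memoDFA_sc_le : (memoDFA L A).sc ≤ (Fintype.card α + 1) ^ L + 1 := by
  have : (memoDFA L A).sc = Fintype.card {l : List α // l.length ≤ L} + 1 :=
    Fintype.card_option
  simpa [this] using List.card_length_le_le α L

variable {L A}

theorem memoDFA_run {x : List α} (hx : x.length ≤ L) {i : ℕ} (hi : i ≤ x.length) :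
    (memoDFA L A).run (memoNext L) x i = some ⟨x.take i, (List.length_take_le' i x).trans hx⟩ := by
  induction i with
  | zero => rfl
  | succ i ih =>
    rw [OneNFA.run_succ (M := memoDFA L A) (f := memoNext L) (by omega), ih (by omega),
      memoNext, dif_pos (by simp; omega)]
    congr 2
    exact List.take_concat_get' x i (by omega)

theorem memoDFA_accepts_iff {x : List α} (hx : x.length ≤ L) :
    (memoDFA L A).Accepts x ↔ x ∈ A := by
  rw [OneNFA.accepts_iff_run_mem (fun _ _ => rfl), memoDFA_run hx le_rfl]
  refine (Option.some_injective _).mem_set_image.trans ?_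
  simp

end Memo

theorem Real.logb_natCast_le_natLog_add_one (b n : ℕ) : Real.logb b n ≤ Nat.log b n + 1 := by
  have := Nat.lt_floor_add_one (Real.logb b n)
  rw [Real.natFloor_logb_natCast] at this
  exact this.le

theorem natCeil_mul_logb_add_le (a b : ℝ) (ha : 0 ≤ a) (n : ℕ) :
    ⌈a * Real.logb 2 n + b⌉₊ ≤ ⌈a⌉₊ * Nat.log 2 n + (⌈a⌉₊ + ⌈b⌉₊) := by
  rw [Nat.ceil_le]
  push_cast
  have hlog : 0 ≤ Real.logb 2 n := by
    rcases n.eq_zero_or_pos with rfl | hn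
    · simp
    · exact Real.logb_nonneg (by norm_num) (by exact_mod_cast hn)
  have : Real.logb 2 n ≤ Nat.log 2 n + 1 := by
    simpa using Real.logb_natCast_le_natLog_add_one 2 n
  have := Nat.le_ceil a
  have := Nat.le_ceil b
  nlinarith

theorem Nat.pow_log_le_succ_pow_clog {b : ℕ} (hb : 1 < b) (d n : ℕ) :
    d ^ Nat.log b n ≤ (n + 1) ^ Nat.clog b d :=
  calc d ^ Nat.log b n ≤ (b ^ Nat.clog b d) ^ Nat.log b n :=
        Nat.pow_le_pow_left (Nat.le_pow_clog hb d) _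
    _ = (b ^ Nat.log b n) ^ Nat.clog b d := by rw [← pow_mul, ← pow_mul, mul_comm]
    _ ≤ (n + 1) ^ Nat.clog b d :=
        Nat.pow_le_pow_left (Nat.pow_log_le_add_one b n) _

theorem exists_poly_succ_pow_natCeil_logb_le (c : ℕ) (a b : ℝ) (ha : 0 ≤ a) :
    ∃ p : Polynomial ℕ, ∀ n : ℕ, (c + 1) ^ ⌈a * Real.logb 2 n + b⌉₊ ≤ p.eval n := by
  set A := ⌈a⌉₊
  set B := ⌈b⌉₊
  refine ⟨.C ((c + 1) ^ (A + B)) * (.X + 1) ^ Nat.clog 2 ((c + 1) ^ A), fun n => ?_⟩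
  calc (c + 1) ^ ⌈a * Real.logb 2 n + b⌉₊
      ≤ (c + 1) ^ (A * Nat.log 2 n + (A + B)) :=
        Nat.pow_le_pow_right c.succ_pos (natCeil_mul_logb_add_le a b ha n)
    _ = ((c + 1) ^ A) ^ Nat.log 2 n * (c + 1) ^ (A + B) := by rw [pow_add, pow_mul]
    _ ≤ (n + 1) ^ Nat.clog 2 ((c + 1) ^ A) * (c + 1) ^ (A + B) :=
        Nat.mul_le_mul_right _ (Nat.pow_log_le_succ_pow_clog one_lt_two _ n)
    _ = _ := by simp [mul_comm]

theorem mem_oneD_of_hasLogCeiling {F : Family} (hF : HasLogCeiling F) : F ∈ oneD := by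
  obtain ⟨a, b, ha, -, hceil⟩ := hF
  set L : ℕ → ℕ := fun n => ⌈a * Real.logb 2 n + b⌉₊
  have short : ∀ n, ∀ x ∈ F.prob.valid n, x.length ≤ L n := fun n x hx =>
    Nat.cast_le.1 ((hceil n x hx).trans (Nat.le_ceil _))
  obtain ⟨p, hp⟩ := exists_poly_succ_pow_natCeil_logb_le (Fintype.card F.alph) a b ha
  refine ⟨fun n => memoDFA (L n) (F.prob.pos n),
    ⟨p + 1, fun n => (memoDFA_sc_le _ _).trans (by simpa using hp n)⟩,
    fun n => memoDFA_deterministic _ _, fun n => ⟨fun x hx => ?_, fun x hx => ?_⟩⟩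
  · exact (memoDFA_accepts_iff (short n x (Or.inl hx))).2 hx
  · exact mt (memoDFA_accepts_iff (short n x (Or.inr hx))).1
      (Set.disjoint_right.1 (F.prob.disj n) hx)

namespace TwoNFA

variable {α : Type} {M : TwoNFA α} {x : List α}

theorem Yields.eq_of_deterministic (hM : M.Deterministic) {c d d' : M.Q × ℕ}
    (h : M.Yields x c d) (h' : M.Yields x c d') : d = d' := by
  obtain ⟨t, ht⟩ := hM c.1 (tapeAt x c.2)
  obtain ⟨-, -, -, e, he, hd⟩ := h
  obtain ⟨-, -, -, e', he', hd'⟩ := h'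
  rw [ht, Set.mem_singleton_iff] at he he'
  subst he
  obtain ⟨hq, rfl⟩ := Prod.ext_iff.1 he'
  exact Prod.ext hq.symm (by simp only at hd; omega)

theorem Deterministic.accepts_iff (hM : M.Deterministic) (c : ℕ → M.Q × ℕ) {K : ℕ}
    (h0 : c 0 = (M.start, 0)) (hstep : ∀ j < K, M.Yields x (c j) (c (j + 1)))
    (hK : M.Halting (c K).1) : M.Accepts x ↔ (c K).1 ∈ M.acc := by
  constructor
  · rintro ⟨k, p, ⟨⟨hp0, hpstep⟩, hhalt⟩, hacc⟩
    have agree : ∀ j (hj : j ≤ k), j ≤ K ∧ p ⟨j, by omega⟩ = c j := by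
      intro j
      induction j with
      | zero => exact fun _ => ⟨K.zero_le, hp0.trans h0.symm⟩
      | succ j ih =>
        intro hj
        obtain ⟨hjK, hpj⟩ := ih (by omega)
        have hy : M.Yields x (c j) (p ⟨j + 1, by omega⟩) := hpj ▸ hpstep ⟨j, hj⟩
        have hjK : j < K := lt_of_le_of_ne hjK fun h => hy.1 (h ▸ hK)
        exact ⟨hjK, hy.eq_of_deterministic hM (hstep j hjK)⟩
    obtain ⟨hkK, hpk⟩ := agree k le_rfl
    obtain rfl : k = K := by
      refine le_antisymm hkK (not_lt.1 fun hlt => (hstep k hlt).1 ?_)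
      exact hpk ▸ (hhalt (Fin.last k)).2 rfl
    exact hpk ▸ hacc
  · refine fun hacc =>
      ⟨K, fun i => c i, ⟨⟨h0, fun i => hstep i i.isLt⟩, fun i => ⟨fun hi => ?_, ?_⟩⟩, hacc⟩
    · refine Fin.ext (le_antisymm (Nat.lt_succ_iff.1 i.isLt) (not_lt.1 fun hlt => ?_))
      exact (hstep i hlt).1 hi
    · rintro rfl
      exact hK

end TwoNFA

theorem tapeAt_succ_of_lt {α : Type} {x : List α} {i : ℕ} (hi : i < x.length) :
    tapeAt x (i + 1) = .inl x[i] :=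
  (dif_neg i.succ_ne_zero).trans (dif_pos hi)

theorem tapeAt_length_succ {α : Type} (x : List α) : tapeAt x (x.length + 1) = .inr true :=
  (dif_neg x.length.succ_ne_zero).trans (dif_neg (by omega))

namespace OneNFA

variable {α : Type} (M : OneNFA α) (f : M.Q → α → M.Q)

/-- `inl q`: still sweeping right with the 1dfa in state `q`; `inr q`: halted on `◁` with final
state `q`. -/
def sweepNext : M.Q ⊕ M.Q → TapeSym α → (M.Q ⊕ M.Q) × ℤ
  | .inl q, .inr false => (.inl q, 1)
  | .inl q, .inl a => (.inl (f q a), 1)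
  | .inl q, .inr true => (.inr q, 0)
  | .inr q, _ => (.inr q, 0)

def toTwoDFA : TwoNFA α where
  Q := M.Q ⊕ M.Q
  start := .inl M.start
  acc := .inr '' M.acc
  rej := .inr '' M.accᶜ
  acc_rej_disj := (Set.disjoint_image_iff Sum.inr_injective).2 disjoint_compl_right
  next q a := {M.sweepNext f q a}
  next_dir := by rintro (q | q) (a | _ | _) t rfl <;> simp [sweepNext]

theorem toTwoDFA_deterministic : (M.toTwoDFA f).Deterministic := fun _ _ => ⟨_, rfl⟩

theorem toTwoDFA_sc : (M.toTwoDFA f).sc = 2 * M.sc := by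
  show Fintype.card (M.Q ⊕ M.Q) = 2 * Fintype.card M.Q
  rw [Fintype.card_sum, two_mul]

variable {M f} {x : List α}

theorem sweepNext_tapeAt_zero (q : M.Q) :
    M.sweepNext f (.inl q) (tapeAt x 0) = (.inl q, 1) :=
  rfl

theorem sweepNext_tapeAt_succ (q : M.Q) {i : ℕ} (hi : i < x.length) :
    M.sweepNext f (.inl q) (tapeAt x (i + 1)) = (.inl (f q x[i]), 1) := by
  rw [tapeAt_succ_of_lt hi]
  rfl

theorem sweepNext_tapeAt_length_succ (q : M.Q) :
    M.sweepNext f (.inl q) (tapeAt x (x.length + 1)) = (.inr q, 0) := by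
  rw [tapeAt_length_succ]
  rfl

theorem toTwoDFA_yields {q : M.Q} {q' : M.Q ⊕ M.Q} {i i' : ℕ} {d : ℤ} (hi : i ≤ x.length + 1)
    (hi' : i' ≤ x.length + 1) (h : M.sweepNext f (.inl q) (tapeAt x i) = (q', d))
    (hd : (i' : ℤ) = i + d) : (M.toTwoDFA f).Yields x (.inl q, i) (q', i') :=
  ⟨by rintro (⟨_, -, h⟩ | ⟨_, -, h⟩) <;> exact Sum.inr_ne_inl h, hi, hi', d,
    Set.mem_singleton_iff.2 h.symm, hd⟩

variable (M f x) in
theorem toTwoDFA_accepts_iff : (M.toTwoDFA f).Accepts x ↔ M.run f x x.length ∈ M.acc := by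
  -- the configuration after `j` steps; the first step only leaves `▷`, hence the truncated `j - 1`
  let c : ℕ → (M.toTwoDFA f).Q × ℕ := fun j =>
    if j ≤ x.length + 1 then (.inl (M.run f x (j - 1)), j)
    else (.inr (M.run f x x.length), x.length + 1)
  have hc : ∀ j ≤ x.length + 1, c j = (.inl (M.run f x (j - 1)), j) := fun j hj => if_pos hj
  have hK : c (x.length + 2) = (.inr (M.run f x x.length), x.length + 1) := if_neg (by omega)
  have hstep : ∀ j < x.length + 2, (M.toTwoDFA f).Yields x (c j) (c (j + 1)) := by
    intro j hj
    rw [hc j (by omega)]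
    rcases j with _ | i
    · rw [hc 1 (by omega)]
      exact toTwoDFA_yields (by omega) (by omega) (sweepNext_tapeAt_zero _) (by simp)
    rcases Nat.lt_or_ge i x.length with hi | hi
    · rw [hc (i + 2) (by omega), show i + 2 - 1 = i + 1 by omega, run_succ hi]
      exact toTwoDFA_yields (by omega) (by omega) (sweepNext_tapeAt_succ _ hi)
        (by push_cast; ring)
    · obtain rfl : i = x.length := by omega
      rw [hK]
      exact toTwoDFA_yields (by omega) le_rfl (sweepNext_tapeAt_length_succ _) (by simp)
  have hhalt : (M.toTwoDFA f).Halting (c (x.length + 2)).1 := by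
    rw [hK]
    exact (em _).imp (Set.mem_image_of_mem _) (Set.mem_image_of_mem _)
  rw [(M.toTwoDFA_deterministic f).accepts_iff c (hc 0 (by omega)) hstep hhalt, hK]
  exact Sum.inr_injective.mem_set_image

end OneNFA

theorem oneD_subset_twoD : oneD ⊆ twoD := by
  rintro F ⟨M, ⟨p, hp⟩, hdet, hsolve⟩
  choose f hf using hdet
  have hacc : ∀ n x, ((M n).toTwoDFA (f n)).Accepts x ↔ (M n).Accepts x := fun n x =>
    ((M n).toTwoDFA_accepts_iff (f n) x).trans ((M n).accepts_iff_run_mem (hf n) x).symm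
  refine ⟨fun n => (M n).toTwoDFA (f n), ⟨2 * p, fun n => ?_⟩,
    fun n => (M n).toTwoDFA_deterministic (f n), fun n => ⟨fun x hx => ?_, fun x hx => ?_⟩⟩
  · simpa [OneNFA.toTwoDFA_sc] using Nat.mul_le_mul_left 2 (hp n)
  · exact (hacc n x).2 ((hsolve n).1 x hx)
  · exact mt (hacc n x).1 ((hsolve n).2 x hx)

theorem twoD_subset_twoN : twoD ⊆ twoN := fun _ ⟨M, hp, _, hs⟩ => ⟨M, hp, hs⟩

theorem ceilLog_mono {C D : Set Family} (h : C ⊆ D) : ceilLog C ⊆ ceilLog D :=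
  fun _ hF => ⟨h hF.1, hF.2⟩

theorem ceilLog_subset_oneD (C : Set Family) : ceilLog C ⊆ oneD :=
  fun _ hF => mem_oneD_of_hasLogCeiling hF.2

/-- `2N/log = 2D/log`; more strongly, `2N/log ⊆ 1D`. -/
theorem twoN_log_collapse :
    ceilLog twoN = ceilLog twoD ∧ ceilLog twoN ⊆ oneD := by
  refine ⟨le_antisymm ?_ (ceilLog_mono twoD_subset_twoN), ceilLog_subset_oneD twoN⟩
  exact fun F hF => ⟨oneD_subset_twoD (ceilLog_subset_oneD twoN hF), hF.2⟩
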